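/- arXiv:2110.02762 — 2 statements merged into one kernel-verified Lean document; each statement's English description precedes it below -/
import Mathlib

section
/- Let (X, μ) be a σ-finite measure space, let n : X × ℝ → ℝ be measurable, let β ≥ 1 and suppose there is a measurable φ : X → ℝ with |n(x, y)| ≤ φ(x) · |y|^β for all x ∈ X and y ∈ ℝ. Let ψ and ν be generating functions and let g, φ satisfy ‖g‖_{L^{βp}(μ)} ≤ C₁ ψ(βp) and ‖φ‖_{L^q(μ)} ≤ C₂ ν(q) for the relevant exponents, where C₁ = ‖g‖_{Gψ} and C₂ = ‖φ‖_{Gν}. Then for any 1 < r < p (with βp in the support of ψ and pr/(p−r) in the support of ν), the Nemytskii operator f(x) = N[g](x) = n(x, g(x)) satisfies ‖f‖_{L^r(μ)} ≤ C₁^β · C₂ · ν(pr/(p−r)) · ψ(βp)^β. -/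
open MeasureTheory ENNReal Set

/-- The Lebesgue–Riesz norm `‖f‖_{L^p(μ)} = (∫ |f|^p dμ)^{1/p}`, valued in `ℝ≥0∞`. -/
noncomputable def LpNorm {X : Type*} [MeasurableSpace X] (μ : Measure X)
    (f : X → ℝ) (p : ℝ) : ℝ≥0∞ :=
  (∫⁻ x, ENNReal.ofReal |f x| ^ p ∂μ) ^ (1 / p)

/-- Lebesgue norm estimate for the Nemytskii operator `N[g](x) = n(x, g(x))`:
if `|n(x,y)| ≤ φ(x)·|y|^β`, `‖g‖_{L^{βp}} ≤ C₁ ψ(βp)` and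
`‖φ‖_{L^{pr/(p-r)}} ≤ C₂ ν(pr/(p-r))` (with `C₁ = ‖g‖_{Gψ}`, `C₂ = ‖φ‖_{Gν}`),
then `‖N[g]‖_{L^r} ≤ C₁^β · C₂ · ν(pr/(p-r)) · ψ(βp)^β` for all `1 < r < p`. -/
theorem nemytskii_Lr_estimate
    {X : Type*} [MeasurableSpace X] (μ : Measure X) [SigmaFinite μ]
    (n : X × ℝ → ℝ) (hn : Measurable n)
    (β : ℝ) (hβ : 1 ≤ β)
    (φ : X → ℝ) (hφ : Measurable φ)
    (hbound : ∀ x : X, ∀ y : ℝ, |n (x, y)| ≤ φ x * |y| ^ β)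
    (g : X → ℝ) (hg : Measurable g)
    (ψ ν : ℝ → ℝ) (C₁ C₂ : ℝ≥0∞)
    (p r : ℝ) (hr : 1 < r) (hrp : r < p)
    (hgC : LpNorm μ g (β * p) ≤ C₁ * ENNReal.ofReal (ψ (β * p)))
    (hφC : LpNorm μ φ (p * r / (p - r)) ≤ C₂ * ENNReal.ofReal (ν (p * r / (p - r)))) :
    LpNorm μ (fun x => n (x, g x)) r ≤
      C₁ ^ β * C₂ * ENNReal.ofReal (ν (p * r / (p - r))) *
        ENNReal.ofReal (ψ (β * p)) ^ β := by
  have hr0 : (0:ℝ) < r := lt_trans one_pos hr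
  have hp0 : (0:ℝ) < p := lt_trans hr0 hrp
  have hpr : (0:ℝ) < p - r := sub_pos.mpr hrp
  have hβ0 : (0:ℝ) ≤ β := le_trans zero_le_one hβ
  set q : ℝ := p * r / (p - r) with hq
  have hq0 : 0 < q := div_pos (mul_pos hp0 hr0) hpr
  have hrq : r < q := by
    rw [hq, lt_div_iff₀ hpr]
    nlinarith
  have hsum : 1 / r = 1 / q + 1 / p := by
    rw [hq]
    field_simp
    ring
  -- pointwise bound
  have hφ0 : ∀ x, 0 ≤ φ x := by
    intro x
    have h := hbound x 1
    have := abs_nonneg (n (x, 1))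
    simp at h
    linarith
  have hpt : ∀ x, ENNReal.ofReal |n (x, g x)| ≤
      ENNReal.ofReal (φ x) * ENNReal.ofReal |g x| ^ β := by
    intro x
    calc ENNReal.ofReal |n (x, g x)| ≤ ENNReal.ofReal (φ x * |g x| ^ β) :=
          ENNReal.ofReal_le_ofReal (hbound x (g x))
      _ = ENNReal.ofReal (φ x) * ENNReal.ofReal |g x| ^ β := by
          rw [ENNReal.ofReal_mul (hφ0 x), ENNReal.ofReal_rpow_of_nonneg (abs_nonneg _) hβ0]
  have key : LpNorm μ (fun x => n (x, g x)) r ≤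
      LpNorm μ φ q * LpNorm μ g (β * p) ^ β := by
    have h1 : LpNorm μ (fun x => n (x, g x)) r ≤
        (∫⁻ x, ((fun x => ENNReal.ofReal (φ x)) * fun x => ENNReal.ofReal |g x| ^ β) x ^ r ∂μ)
          ^ (1 / r) := by
      apply ENNReal.rpow_le_rpow _ (by positivity)
      apply lintegral_mono
      intro x
      exact ENNReal.rpow_le_rpow (hpt x) hr0.le
    have h2 := ENNReal.lintegral_Lp_mul_le_Lq_mul_Lr hr0 hrq hsum μ
      (f := fun x => ENNReal.ofReal (φ x)) (g := fun x => ENNReal.ofReal |g x| ^ β)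
      (hφ.ennreal_ofReal.aemeasurable) ((hg.abs.ennreal_ofReal.pow_const β).aemeasurable)
    refine le_trans h1 (le_trans h2 ?_)
    have e1 : (∫⁻ x, ENNReal.ofReal (φ x) ^ q ∂μ) ^ (1 / q) = LpNorm μ φ q := by
      unfold LpNorm
      congr 1
      refine lintegral_congr fun x => by rw [abs_of_nonneg (hφ0 x)]
    have e2 : (∫⁻ x, (ENNReal.ofReal |g x| ^ β) ^ p ∂μ) ^ (1 / p)
        = LpNorm μ g (β * p) ^ β := by
      unfold LpNorm
      simp_rw [← ENNReal.rpow_mul]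
      congr 1
      have hβ0' : (0:ℝ) < β := lt_of_lt_of_le one_pos hβ
      field_simp
    rw [e1, e2]
  refine le_trans key ?_
  calc LpNorm μ φ q * LpNorm μ g (β * p) ^ β
      ≤ (C₂ * ENNReal.ofReal (ν q)) * (C₁ * ENNReal.ofReal (ψ (β * p))) ^ β :=
        mul_le_mul' hφC (ENNReal.rpow_le_rpow hgC hβ0)
    _ = C₁ ^ β * C₂ * ENNReal.ofReal (ν q) * ENNReal.ofReal (ψ (β * p)) ^ β := by
        rw [ENNReal.mul_rpow_of_nonneg _ _ hβ0]; ring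
end

section
/- (Theorem 2.1) Let (X, μ) be a σ-finite measure space, let n : X × ℝ → ℝ be measurable with |n(x, y)| ≤ φ(x) · |y|^β for all x, y, where β ≥ 1 and φ : X → ℝ is measurable. Let ψ, ν be generating functions with ‖g‖_{Gψ} < ∞ and ‖φ‖_{Gν} < ∞, and define W(r) = inf_{p > r} { ν(pr/(p−r)) · ψ(βp)^β } (interpreting ψ, ν as +∞ outside their supports). Suppose W(r) is finite for all r in some non-trivial interval (c, d) with 1 ≤ c < d ≤ ∞. Then the Nemytskii image f(x) = n(x, g(x)) satisfies ‖f‖_{GW} ≤ ‖φ‖_{Gν} · (‖g‖_{Gψ})^β, i.e. for every r ∈ (c, d), ‖f‖_{L^r(μ)} ≤ ‖φ‖_{Gν} · (‖g‖_{Gψ})^β · W(r). -/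
open MeasureTheory ENNReal Set

/-- The Grand Lebesgue Space norm `‖f‖_{Gψ} = sup_{p} ‖f‖_{L^p(μ)} / ψ(p)`, where the
generating function `ψ : ℝ → ℝ≥0∞` is interpreted as `+∞` outside its support
(so that only `p` in the support contribute to the supremum). -/
noncomputable def GNorm {X : Type*} [MeasurableSpace X] (μ : Measure X)
    (f : X → ℝ) (ψ : ℝ → ℝ≥0∞) : ℝ≥0∞ :=
  ⨆ p ∈ Set.Ici (1 : ℝ), LpNorm μ f p / ψ p

/-- Theorem 2.1: if `|n(x,y)| ≤ φ(x)·|y|^β`, `‖g‖_{Gψ} < ∞`, `‖φ‖_{Gν} < ∞`, and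
`W(r) = inf_{p > r} ν(pr/(p-r)) · ψ(βp)^β` is finite on a non-trivial interval `(c,d)`,
then the Nemytskii image `f(x) = n(x, g(x))` satisfies
`‖f‖_{L^r} ≤ ‖φ‖_{Gν} · ‖g‖_{Gψ}^β · W(r)` for every `r ∈ (c,d)`,
i.e. `‖f‖_{GW} ≤ ‖φ‖_{Gν} · ‖g‖_{Gψ}^β`. -/
theorem nemytskii_GLS_theorem_2_1
    {X : Type*} [MeasurableSpace X] (μ : Measure X) [SigmaFinite μ]
    (n : X × ℝ → ℝ) (hn : Measurable n)
    (β : ℝ) (hβ : 1 ≤ β)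
    (φ : X → ℝ) (hφ : Measurable φ)
    (hbound : ∀ x : X, ∀ y : ℝ, |n (x, y)| ≤ φ x * |y| ^ β)
    (g : X → ℝ) (hg : Measurable g)
    (ψ ν : ℝ → ℝ≥0∞)
    (hgψ : GNorm μ g ψ < ⊤) (hφν : GNorm μ φ ν < ⊤)
    (W : ℝ → ℝ≥0∞)
    (hW : ∀ r : ℝ, W r = ⨅ p ∈ Set.Ioi r, ν (p * r / (p - r)) * (ψ (β * p)) ^ β)
    (c : ℝ) (d : ℝ≥0∞) (hc : 1 ≤ c) (hcd : ENNReal.ofReal c < d)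
    (hWfin : ∀ r : ℝ, c < r → ENNReal.ofReal r < d → W r < ⊤) :
    ∀ r : ℝ, c < r → ENNReal.ofReal r < d →
      LpNorm μ (fun x => n (x, g x)) r ≤
        GNorm μ φ ν * (GNorm μ g ψ) ^ β * W r := by
  intro r hcr hrd
  set f : X → ℝ := fun x => n (x, g x) with hfdef
  have hr1 : 1 < r := lt_of_le_of_lt hc hcr
  have hr0 : 0 < r := by linarith
  have hβ0 : 0 < β := by linarith
  have hφ0 : ∀ x, 0 ≤ φ x := by
    intro x
    have := hbound x 1
    simp only [abs_one, Real.one_rpow, mul_one] at this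
    exact le_trans (abs_nonneg _) this
  set F : X → ℝ≥0∞ := fun x => ENNReal.ofReal |φ x| with hFdef
  set G : X → ℝ≥0∞ := fun x => ENNReal.ofReal |g x| with hGdef
  have hFm : Measurable F := hφ.abs.ennreal_ofReal
  have hGm : Measurable G := hg.abs.ennreal_ofReal
  have hpt : ∀ x, ENNReal.ofReal |f x| ≤ F x * G x ^ β := by
    intro x
    calc ENNReal.ofReal |f x| ≤ ENNReal.ofReal (φ x * |g x| ^ β) :=
          ENNReal.ofReal_le_ofReal (hbound x (g x))
      _ = F x * G x ^ β := by
          rw [ENNReal.ofReal_mul (hφ0 x),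
            ← ENNReal.ofReal_rpow_of_nonneg (abs_nonneg _) hβ0.le]
          simp [hFdef, hGdef, abs_of_nonneg (hφ0 x)]
  set C := GNorm μ φ ν * GNorm μ g ψ ^ β with hCdef
  have hCne : C ≠ ⊤ :=
    ENNReal.mul_ne_top hφν.ne (ENNReal.rpow_ne_top_of_nonneg hβ0.le hgψ.ne)
  have hzero : (∀ᵐ x ∂μ, ENNReal.ofReal |f x| = 0) → LpNorm μ f r = 0 := by
    intro h
    have h0 : ∫⁻ x, ENNReal.ofReal |f x| ^ r ∂μ = 0 := by
      rw [← lintegral_zero (μ := μ)]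
      refine lintegral_congr_ae ?_
      filter_upwards [h] with x hx
      rw [hx, ENNReal.zero_rpow_of_pos hr0]
    rw [LpNorm, h0, ENNReal.zero_rpow_of_pos (by positivity)]
  have key : ∀ p : ℝ, r < p → ν (p * r / (p - r)) * ψ (β * p) ^ β ≠ ⊤ →
      LpNorm μ f r ≤ C * (ν (p * r / (p - r)) * ψ (β * p) ^ β) := by
    intro p hrp hfin
    set q := p * r / (p - r) with hqdef
    have hpr : 0 < p - r := by linarith
    have hp0 : 0 < p := by linarith
    have hq0 : 0 < q := div_pos (mul_pos hp0 hr0) hpr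
    have hrq : r < q := by
      rw [hqdef, lt_div_iff₀ hpr]; nlinarith
    have hq1 : (1 : ℝ) ≤ q := by linarith
    have hβp1 : (1 : ℝ) ≤ β * p := by nlinarith
    have hβp0 : (0 : ℝ) < β * p := by linarith
    have hGφle : LpNorm μ φ q / ν q ≤ GNorm μ φ ν :=
      le_iSup₂ (f := fun p (_ : p ∈ Set.Ici (1:ℝ)) => LpNorm μ φ p / ν p) q hq1
    have hGgle : LpNorm μ g (β * p) / ψ (β * p) ≤ GNorm μ g ψ :=
      le_iSup₂ (f := fun p (_ : p ∈ Set.Ici (1:ℝ)) => LpNorm μ g p / ψ p) (β * p) hβp1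
    by_cases hν0 : ν q = 0
    · -- φ = 0 a.e., so f = 0 a.e.
      have hLφ : LpNorm μ φ q = 0 := by
        by_contra hne
        rw [hν0, ENNReal.div_zero hne] at hGφle
        exact hφν.ne (top_le_iff.mp hGφle)
      have hint : ∫⁻ x, F x ^ q ∂μ = 0 := by
        have := hLφ
        rw [LpNorm] at this
        rcases (ENNReal.rpow_eq_zero_iff).mp this with ⟨h1, _⟩ | ⟨_, h2⟩
        · exact h1
        · exact absurd h2 (not_lt.mpr (by positivity))
      have hFae : ∀ᵐ x ∂μ, F x ^ q = 0 :=
        (lintegral_eq_zero_iff (hFm.pow_const q)).mp hint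
      have : ∀ᵐ x ∂μ, ENNReal.ofReal |f x| = 0 := by
        filter_upwards [hFae] with x hx
        rcases (ENNReal.rpow_eq_zero_iff).mp hx with ⟨h1, _⟩ | ⟨_, h2⟩
        · exact le_antisymm (le_trans (hpt x) (by rw [h1, zero_mul])) (zero_le)
        · exact absurd h2 (not_lt.mpr hq0.le)
      rw [hzero this]
      exact zero_le
    by_cases hψ0 : ψ (β * p) = 0
    · -- g = 0 a.e., so f = 0 a.e.
      have hLg : LpNorm μ g (β * p) = 0 := by
        by_contra hne
        rw [hψ0, ENNReal.div_zero hne] at hGgle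
        exact hgψ.ne (top_le_iff.mp hGgle)
      have hint : ∫⁻ x, G x ^ (β * p) ∂μ = 0 := by
        have := hLg
        rw [LpNorm] at this
        rcases (ENNReal.rpow_eq_zero_iff).mp this with ⟨h1, _⟩ | ⟨_, h2⟩
        · exact h1
        · exact absurd h2 (not_lt.mpr (by positivity))
      have hGae : ∀ᵐ x ∂μ, G x ^ (β * p) = 0 :=
        (lintegral_eq_zero_iff (hGm.pow_const (β * p))).mp hint
      have : ∀ᵐ x ∂μ, ENNReal.ofReal |f x| = 0 := by
        filter_upwards [hGae] with x hx
        rcases (ENNReal.rpow_eq_zero_iff).mp hx with ⟨h1, _⟩ | ⟨_, h2⟩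
        · refine le_antisymm (le_trans (hpt x) ?_) (zero_le)
          rw [h1, ENNReal.zero_rpow_of_pos hβ0, mul_zero]
        · exact absurd h2 (not_lt.mpr hβp0.le)
      rw [hzero this]
      exact zero_le
    -- main case
    have hψβ0 : ψ (β * p) ^ β ≠ 0 := by
      rw [Ne, ENNReal.rpow_eq_zero_iff]
      push_neg
      exact ⟨fun h => absurd h hψ0, fun _ => le_of_lt hβ0⟩
    have hνt : ν q ≠ ⊤ := by
      intro h
      exact hfin (by rw [h, ENNReal.top_mul hψβ0])
    have hψt : ψ (β * p) ≠ ⊤ := by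
      intro h
      apply hfin
      rw [h, ENNReal.top_rpow_of_pos hβ0, ENNReal.mul_top hν0]
    have hφq : LpNorm μ φ q ≤ GNorm μ φ ν * ν q :=
      (ENNReal.div_le_iff hν0 hνt).mp hGφle
    have hgp : LpNorm μ g (β * p) ≤ GNorm μ g ψ * ψ (β * p) :=
      (ENNReal.div_le_iff hψ0 hψt).mp hGgle
    have hexp : 1 / r = 1 / q + 1 / p := by
      rw [hqdef]
      field_simp
      ring
    have holder : LpNorm μ f r ≤ LpNorm μ φ q * LpNorm μ g (β * p) ^ β := by
      have h1 : LpNorm μ f r ≤ (∫⁻ x, (F x * G x ^ β) ^ r ∂μ) ^ (1 / r) := by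
        refine ENNReal.rpow_le_rpow (lintegral_mono fun x => ?_) (by positivity)
        exact ENNReal.rpow_le_rpow (hpt x) hr0.le
      have h2 : (∫⁻ x, (F x * G x ^ β) ^ r ∂μ) ^ (1 / r) ≤
          (∫⁻ x, F x ^ q ∂μ) ^ (1 / q) * (∫⁻ x, (G x ^ β) ^ p ∂μ) ^ (1 / p) := by
        have := ENNReal.lintegral_Lp_mul_le_Lq_mul_Lr hr0 hrq hexp μ
          hFm.aemeasurable ((hGm.pow_const β).aemeasurable)
        simpa [Pi.mul_apply] using this
      have h3 : (∫⁻ x, (G x ^ β) ^ p ∂μ) ^ (1 / p) = LpNorm μ g (β * p) ^ β := by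
        rw [LpNorm, ← ENNReal.rpow_mul]
        have hep : 1 / (β * p) * β = 1 / p := by field_simp
        rw [hep]
        congr 1
        refine lintegral_congr fun x => ?_
        rw [← ENNReal.rpow_mul]
      have h4 : (∫⁻ x, F x ^ q ∂μ) ^ (1 / q) = LpNorm μ φ q := rfl
      calc LpNorm μ f r ≤ _ := h1
        _ ≤ _ := h2
        _ = LpNorm μ φ q * LpNorm μ g (β * p) ^ β := by rw [h3, h4]
    calc LpNorm μ f r ≤ LpNorm μ φ q * LpNorm μ g (β * p) ^ β := holder
      _ ≤ (GNorm μ φ ν * ν q) * (GNorm μ g ψ * ψ (β * p)) ^ β :=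
        mul_le_mul' hφq (ENNReal.rpow_le_rpow hgp hβ0.le)
      _ = C * (ν q * ψ (β * p) ^ β) := by
        rw [ENNReal.mul_rpow_of_nonneg _ _ hβ0.le, hCdef]
        ring
  -- conclude
  have hWlt := hWfin r hcr hrd
  rw [hW r] at hWlt
  simp only [iInf_lt_iff] at hWlt
  obtain ⟨p₀, hp₀, hp₀fin⟩ := hWlt
  by_cases hC0 : C = 0
  · have := key p₀ hp₀ hp₀fin.ne
    rw [hC0, zero_mul] at this
    calc LpNorm μ f r ≤ 0 := this
      _ ≤ C * W r := zero_le
  · have hdiv : LpNorm μ f r / C ≤ ⨅ p ∈ Set.Ioi r, ν (p * r / (p - r)) * ψ (β * p) ^ β := by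
      refine le_iInf₂ fun p hp => ?_
      by_cases hfin : ν (p * r / (p - r)) * ψ (β * p) ^ β = ⊤
      · rw [hfin]; exact le_top
      · rw [ENNReal.div_le_iff hC0 hCne, mul_comm]
        exact key p hp hfin
    have h2 := mul_le_mul_left hdiv C
    rw [ENNReal.div_mul_cancel hC0 hCne] at h2
    rw [hW r]
    exact h2.trans_eq (mul_comm _ _)
end
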